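/- arXiv:2108.02869 — 8 statements merged into one kernel-verified Lean document; each statement's English description precedes it below -/
import Mathlib

section
/- Let T : H₁ × H₂ → K be a bounded bilinear operator and let τ₁ > 0 be an ordered singular value of T with associated unit ordered singular vectors (x₁, y₁, z₁). Define T₂(x,y) = T(x,y) − τ₁⟨x,x₁⟩⟨y,y₁⟩z₁. If τ₂ > 0 is a singular value of T₂ with associated unit singular vector triple (x₂, y₂, z₂), then x₁ ⊥ x₂, y₁ ⊥ y₂, and z₁ ⊥ z₂. -/
open scoped RealInnerProductSpace

theorem stmt_7 {H₁ H₂ K : Type*}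
    [NormedAddCommGroup H₁] [InnerProductSpace ℝ H₁] [CompleteSpace H₁]
    [NormedAddCommGroup H₂] [InnerProductSpace ℝ H₂] [CompleteSpace H₂]
    [NormedAddCommGroup K] [InnerProductSpace ℝ K] [CompleteSpace K]
    (T T₂ : H₁ →L[ℝ] H₂ →L[ℝ] K)
    (τ₁ τ₂ : ℝ) (hτ₁ : 0 < τ₁) (hτ₂ : 0 < τ₂)
    (x₁ x₂ : H₁) (y₁ y₂ : H₂) (z₁ z₂ : K)
    (hx₁ : ‖x₁‖ = 1) (hy₁ : ‖y₁‖ = 1) (hz₁ : ‖z₁‖ = 1)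
    (hx₂ : ‖x₂‖ = 1) (hy₂ : ‖y₂‖ = 1) (hz₂ : ‖z₂‖ = 1)
    -- τ₁ is a singular value of T with triple (x₁, y₁, z₁)
    (h11 : T x₁ y₁ = τ₁ • z₁)
    (h12 : ContinuousLinearMap.adjoint (T.flip y₁) z₁ = τ₁ • x₁)
    (h13 : ContinuousLinearMap.adjoint (T x₁) z₁ = τ₁ • y₁)
    -- τ₁ is ordered
    (ho1 : ∀ x : H₁, T x y₁ = (τ₁ * ⟪x, x₁⟫) • z₁)
    (ho2 : ∀ y : H₂, T x₁ y = (τ₁ * ⟪y, y₁⟫) • z₁)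
    (ho3 : ∀ y : H₂, ContinuousLinearMap.adjoint (T.flip y) z₁ = (τ₁ * ⟪y, y₁⟫) • x₁)
    -- T₂ is the deflated operator
    (hT₂ : ∀ (x : H₁) (y : H₂), T₂ x y = T x y - (τ₁ * ⟪x, x₁⟫ * ⟪y, y₁⟫) • z₁)
    -- τ₂ is a singular value of T₂ with triple (x₂, y₂, z₂)
    (h21 : T₂ x₂ y₂ = τ₂ • z₂)
    (h22 : ContinuousLinearMap.adjoint (T₂.flip y₂) z₂ = τ₂ • x₂)
    (h23 : ContinuousLinearMap.adjoint (T₂ x₂) z₂ = τ₂ • y₂) :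
    ⟪x₁, x₂⟫ = 0 ∧ ⟪y₁, y₂⟫ = 0 ∧ ⟪z₁, z₂⟫ = 0 := by
  have hy1self : ⟪y₁, y₁⟫ = 1 := by
    rw [real_inner_self_eq_norm_sq, hy₁]; norm_num
  have hx1self : ⟪x₁, x₁⟫ = (1:ℝ) := by
    rw [real_inner_self_eq_norm_sq, hx₁]; norm_num
  have hA : T₂ x₂ y₁ = 0 := by
    rw [hT₂, ho1, hy1self]; simp
  have hB : T₂ x₁ y₂ = 0 := by
    rw [hT₂, ho2, hx1self]; simp [mul_comm]
  have hy2 : ⟪y₂, y₁⟫ = 0 := by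
    have h := congrArg (fun v => ⟪v, y₁⟫) h23
    simp only [ContinuousLinearMap.adjoint_inner_left, hA, inner_zero_left,
      inner_zero_right, real_inner_smul_left] at h
    rcases mul_eq_zero.mp h.symm with h | h
    · exact absurd h (ne_of_gt hτ₂)
    · exact h
  have hx2 : ⟪x₂, x₁⟫ = 0 := by
    have hf : T₂.flip y₂ x₁ = 0 := by
      simp [ContinuousLinearMap.flip_apply, hB]
    have h := congrArg (fun v => ⟪v, x₁⟫) h22
    simp only [ContinuousLinearMap.adjoint_inner_left, hf, inner_zero_left,
      inner_zero_right, real_inner_smul_left] at h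
    rcases mul_eq_zero.mp h.symm with h | h
    · exact absurd h (ne_of_gt hτ₂)
    · exact h
  refine ⟨by rw [real_inner_comm]; exact hx2, by rw [real_inner_comm]; exact hy2, ?_⟩
  have hTz : T x₂ y₂ = τ₂ • z₂ := by
    have h := h21
    rw [hT₂, hx2] at h
    simpa using h
  have key : ⟪T x₂ y₂, z₁⟫ = 0 := by
    have h1 : ⟪T x₂ y₂, z₁⟫ = ⟪x₂, ContinuousLinearMap.adjoint (T.flip y₂) z₁⟫ := by
      rw [ContinuousLinearMap.adjoint_inner_right]; rfl
    rw [h1, ho3, real_inner_smul_right, hx2, mul_zero]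
  rw [hTz, real_inner_smul_left] at key
  rcases mul_eq_zero.mp key with h | h
  · exact absurd h (ne_of_gt hτ₂)
  · rw [real_inner_comm]; exact h
end

section
/- Let T : H₁ × H₂ → K be a bounded bilinear operator with an ordered singular value τ₁ and associated unit ordered singular vectors (x₁, y₁, z₁), and set T₂(x,y) = T(x,y) − τ₁⟨x,x₁⟩⟨y,y₁⟩z₁. Then ‖T₂(x,y)‖² + τ₁²⟨x,x₁⟩²⟨y,y₁⟩² = ‖T(x,y)‖² for all (x,y), and consequently ‖T₂‖ ≤ ‖T‖. -/
open scoped RealInnerProductSpace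

theorem stmt_9 {H₁ H₂ K : Type*}
    [NormedAddCommGroup H₁] [InnerProductSpace ℝ H₁] [CompleteSpace H₁]
    [NormedAddCommGroup H₂] [InnerProductSpace ℝ H₂] [CompleteSpace H₂]
    [NormedAddCommGroup K] [InnerProductSpace ℝ K] [CompleteSpace K]
    (T T₂ : H₁ →L[ℝ] H₂ →L[ℝ] K) (τ₁ : ℝ) (hτ₁ : 0 < τ₁)
    (x₁ : H₁) (y₁ : H₂) (z₁ : K)
    (hx₁ : ‖x₁‖ = 1) (hy₁ : ‖y₁‖ = 1) (hz₁ : ‖z₁‖ = 1)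
    (h11 : T x₁ y₁ = τ₁ • z₁)
    (ho1 : ∀ x : H₁, T x y₁ = (τ₁ * ⟪x, x₁⟫) • z₁)
    (ho2 : ∀ y : H₂, T x₁ y = (τ₁ * ⟪y, y₁⟫) • z₁)
    (ho3 : ∀ y : H₂, ContinuousLinearMap.adjoint (T.flip y) z₁ = (τ₁ * ⟪y, y₁⟫) • x₁)
    (hT₂ : ∀ (x : H₁) (y : H₂), T₂ x y = T x y - (τ₁ * ⟪x, x₁⟫ * ⟪y, y₁⟫) • z₁) :
    (∀ (x : H₁) (y : H₂),
      ‖T₂ x y‖ ^ 2 + τ₁ ^ 2 * ⟪x, x₁⟫ ^ 2 * ⟪y, y₁⟫ ^ 2 = ‖T x y‖ ^ 2) ∧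
    ‖T₂‖ ≤ ‖T‖ := by
  have key : ∀ (x : H₁) (y : H₂), ⟪T x y, z₁⟫ = τ₁ * ⟪x, x₁⟫ * ⟪y, y₁⟫ := by
    intro x y
    have h1 : ⟪x, ContinuousLinearMap.adjoint (T.flip y) z₁⟫ = ⟪T.flip y x, z₁⟫ :=
      ContinuousLinearMap.adjoint_inner_right (T.flip y) x z₁
    rw [ho3 y] at h1
    have h2 : T.flip y x = T x y := rfl
    rw [h2] at h1
    rw [← h1, real_inner_smul_right]
    ring
  have main : ∀ (x : H₁) (y : H₂),
      ‖T₂ x y‖ ^ 2 + τ₁ ^ 2 * ⟪x, x₁⟫ ^ 2 * ⟪y, y₁⟫ ^ 2 = ‖T x y‖ ^ 2 := by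
    intro x y
    rw [hT₂ x y, @norm_sub_sq_real, real_inner_smul_right, key x y, norm_smul, mul_pow,
      hz₁]
    simp only [Real.norm_eq_abs, sq_abs]
    ring
  refine ⟨main, ?_⟩
  refine ContinuousLinearMap.opNorm_le_bound _ (norm_nonneg T) fun x => ?_
  refine ContinuousLinearMap.opNorm_le_bound _ (by positivity) fun y => ?_
  have hle : ‖T₂ x y‖ ≤ ‖T x y‖ := by
    have h := main x y
    have h2 : ‖T₂ x y‖ ^ 2 ≤ ‖T x y‖ ^ 2 := by nlinarith [sq_nonneg (τ₁ * ⟪x, x₁⟫ * ⟪y, y₁⟫)]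
    nlinarith [norm_nonneg (T₂ x y), norm_nonneg (T x y)]
  calc ‖T₂ x y‖ ≤ ‖T x y‖ := hle
    _ ≤ ‖T x‖ * ‖y‖ := (T x).le_opNorm y
    _ ≤ ‖T‖ * ‖x‖ * ‖y‖ := by
        have := T.le_opNorm x
        exact mul_le_mul_of_nonneg_right this (norm_nonneg y)
end

section
/- Let T : H₁ × H₂ → K be a compact bilinear operator. If (xₙ) ⊂ H₁, (yₙ) ⊂ H₂ are orthonormal sequences and (zₙ) ⊂ K is an orthonormal sequence such that T(xₙ,yₙ) = τₙ zₙ with τₙ > 0 for all n, then τₙ → 0. -/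
open scoped RealInnerProductSpace

theorem stmt_10 {H₁ H₂ K : Type*}
    [NormedAddCommGroup H₁] [InnerProductSpace ℝ H₁] [CompleteSpace H₁]
    [TopologicalSpace.SeparableSpace H₁]
    [NormedAddCommGroup H₂] [InnerProductSpace ℝ H₂] [CompleteSpace H₂]
    [TopologicalSpace.SeparableSpace H₂]
    [NormedAddCommGroup K] [InnerProductSpace ℝ K] [CompleteSpace K]
    [TopologicalSpace.SeparableSpace K]
    (T : H₁ →L[ℝ] H₂ →L[ℝ] K)
    (hT : IsCompact (closure ((fun p : H₁ × H₂ => T p.1 p.2) ''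
      (Metric.closedBall 0 1 ×ˢ Metric.closedBall 0 1))))
    (x : ℕ → H₁) (y : ℕ → H₂) (z : ℕ → K)
    (hx : Orthonormal ℝ x) (hy : Orthonormal ℝ y) (hz : Orthonormal ℝ z)
    (τ : ℕ → ℝ) (hτ : ∀ n, 0 < τ n)
    (hTxy : ∀ n, T (x n) (y n) = τ n • z n) :
    Filter.Tendsto τ Filter.atTop (nhds 0) := by
  by_contra h
  rw [Metric.tendsto_atTop] at h
  push_neg at h
  obtain ⟨ε, hε, hfreq⟩ := h
  obtain ⟨φ, hφ, hφε⟩ := Filter.extraction_of_frequently_atTop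
    (Filter.frequently_atTop.mpr hfreq)
  -- the sequence u n = T (x (φ n)) (y (φ n)) lies in the compact set
  set u : ℕ → K := fun n => T (x (φ n)) (y (φ n)) with hu
  have hmem : ∀ n, u n ∈ closure ((fun p : H₁ × H₂ => T p.1 p.2) ''
      (Metric.closedBall 0 1 ×ˢ Metric.closedBall 0 1)) := by
    intro n
    apply subset_closure
    refine ⟨(x (φ n), y (φ n)), ⟨?_, ?_⟩, rfl⟩
    · simp [Metric.mem_closedBall, hx.1 (φ n)]
    · simp [Metric.mem_closedBall, hy.1 (φ n)]
  obtain ⟨a, -, ψ, hψ, hconv⟩ := hT.tendsto_subseq hmem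
  have hcauchy : CauchySeq (u ∘ ψ) := hconv.cauchySeq
  rw [Metric.cauchySeq_iff] at hcauchy
  obtain ⟨N, hN⟩ := hcauchy ε hε
  have hdist := hN (N + 1) (by omega) N (le_refl N)
  -- compute the distance
  have hij : φ (ψ (N + 1)) ≠ φ (ψ N) := by
    have : ψ N < ψ (N + 1) := hψ (by omega)
    exact fun hc => absurd (hφ.injective hc) (by omega)
  have hd : dist (u (ψ (N + 1))) (u (ψ N)) ^ 2
      = τ (φ (ψ (N + 1))) ^ 2 + τ (φ (ψ N)) ^ 2 := by
    rw [dist_eq_norm]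
    simp only [hu, hTxy]
    rw [← real_inner_self_eq_norm_sq, inner_sub_sub_self]
    simp only [real_inner_smul_left, real_inner_smul_right,
      real_inner_self_eq_norm_sq, hz.2 hij, hz.2 hij.symm, hz.1,
      norm_smul, Real.norm_eq_abs, mul_one, sq_abs]
    ring
  have h1 : ε ≤ τ (φ (ψ (N + 1))) := by
    have := hφε (ψ (N + 1))
    rwa [Real.dist_0_eq_abs, abs_of_pos (hτ _)] at this
  have hle : ε ^ 2 ≤ dist (u (ψ (N + 1))) (u (ψ N)) ^ 2 := by
    rw [hd]
    nlinarith [sq_nonneg (τ (φ (ψ N))), hτ (φ (ψ N))]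
  have : ε ≤ dist (u (ψ (N + 1))) (u (ψ N)) := by
    nlinarith [dist_nonneg (x := u (ψ (N + 1))) (y := u (ψ N))]
  simp only [Function.comp] at hdist
  linarith
end

section
/- Let (τᵢ) be a sequence of nonnegative reals converging to 0, and let (xᵢ), (yᵢ), (zᵢ) be orthonormal sequences in Hilbert spaces H₁, H₂, K respectively. Then the series T(x,y) = Σᵢ τᵢ⟨x,xᵢ⟩⟨y,yᵢ⟩zᵢ converges for every (x,y) ∈ H₁ × H₂ and defines a compact bilinear operator T : H₁ × H₂ → K. -/
open scoped RealInnerProductSpace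

open Filter

/-!
Bessel's inequality and Cauchy–Schwarz give `∑ i, |⟪a, x i⟫ * ⟪b, y i⟫| ≤ ‖a‖ * ‖b‖`, so the series
converges absolutely and defines a bounded bilinear map. For `a`, `b` in the unit balls, each
partial sum `∑ i ∈ s, (⟪a, x i⟫ * ⟪b, y i⟫) • (τ i • z i)` then has coefficients of total absolute
value at most `1`, hence lies in the convex hull of `C ∪ -C` with `C = {0} ∪ {τ i • z i}`. Since
`τ i • z i → 0`, the set `C` is compact, so this convex hull is totally bounded and its closure,
which contains the image of the two unit balls, is compact.
-/

theorem Convex.sum_smul_mem_of_sum_le_one {ι E : Type*} [AddCommGroup E] [Module ℝ E]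
    {s : Set E} (hs : Convex ℝ s) (h₀ : (0 : E) ∈ s) {t : Finset ι} {w : ι → ℝ} {z : ι → E}
    (hw₀ : ∀ i ∈ t, 0 ≤ w i) (hw₁ : ∑ i ∈ t, w i ≤ 1) (hz : ∀ i ∈ t, z i ∈ s) :
    ∑ i ∈ t, w i • z i ∈ s := by
  rcases (Finset.sum_nonneg hw₀).eq_or_lt with hw | hw
  · rwa [Finset.sum_eq_zero fun i hi => by
      rw [(Finset.sum_eq_zero_iff_of_nonneg hw₀).1 hw.symm i hi, zero_smul]]
  · have := (hs.starConvex h₀).smul_mem (hs.centerMass_mem hw₀ hw hz) hw.le hw₁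
    rwa [Finset.centerMass, smul_inv_smul₀ hw.ne'] at this

theorem sum_smul_mem_convexHull_union_neg {ι E : Type*} [AddCommGroup E] [Module ℝ E]
    {C : Set E} (h₀ : (0 : E) ∈ C) {s : Finset ι} {c : ι → ℝ} {v : ι → E}
    (hv : ∀ i ∈ s, v i ∈ C) (hc : ∑ i ∈ s, |c i| ≤ 1) :
    ∑ i ∈ s, c i • v i ∈ convexHull ℝ (C ∪ -C) := by
  have hsign : ∀ i, c i • v i = (|c i|) • (if 0 ≤ c i then v i else -v i) := by
    intro i
    split_ifs with h
    · rw [abs_of_nonneg h]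
    · rw [abs_of_neg (not_le.1 h), smul_neg, neg_smul, neg_neg]
  simp only [hsign]
  refine (convex_convexHull ℝ (C ∪ -C)).sum_smul_mem_of_sum_le_one
    (subset_convexHull ℝ _ (Or.inl h₀)) (fun i _ => abs_nonneg _) hc
    fun i hi => subset_convexHull ℝ _ ?_
  split_ifs
  · exact Or.inl (hv i hi)
  · exact Or.inr (Set.neg_mem_neg.2 (hv i hi))

section Bessel

variable {ι H₁ H₂ : Type*} [NormedAddCommGroup H₁] [InnerProductSpace ℝ H₁]
  [NormedAddCommGroup H₂] [InnerProductSpace ℝ H₂] {x : ι → H₁} {y : ι → H₂}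

theorem Orthonormal.sqrt_sum_sq_abs_inner_le (hx : Orthonormal ℝ x) (a : H₁) (s : Finset ι) :
    √(∑ i ∈ s, |⟪a, x i⟫| ^ 2) ≤ ‖a‖ := by
  have bessel : ∑ i ∈ s, |⟪a, x i⟫| ^ 2 ≤ ‖a‖ ^ 2 := by
    simpa [Real.norm_eq_abs, real_inner_comm] using hx.sum_inner_products_le (x := a) (s := s)
  exact (Real.sqrt_le_sqrt bessel).trans_eq (Real.sqrt_sq (norm_nonneg a))

theorem Orthonormal.sum_abs_inner_mul_inner_le (hx : Orthonormal ℝ x) (hy : Orthonormal ℝ y)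
    (a : H₁) (b : H₂) (s : Finset ι) : ∑ i ∈ s, |⟪a, x i⟫ * ⟪b, y i⟫| ≤ ‖a‖ * ‖b‖ :=
  calc ∑ i ∈ s, |⟪a, x i⟫ * ⟪b, y i⟫| = ∑ i ∈ s, |⟪a, x i⟫| * |⟪b, y i⟫| := by
        simp only [abs_mul]
    _ ≤ √(∑ i ∈ s, |⟪a, x i⟫| ^ 2) * √(∑ i ∈ s, |⟪b, y i⟫| ^ 2) :=
        Real.sum_mul_le_sqrt_mul_sqrt s _ _
    _ ≤ ‖a‖ * ‖b‖ := mul_le_mul (hx.sqrt_sum_sq_abs_inner_le a s)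
        (hy.sqrt_sum_sq_abs_inner_le b s) (Real.sqrt_nonneg _) (norm_nonneg a)

theorem Orthonormal.summable_abs_inner_mul_inner (hx : Orthonormal ℝ x) (hy : Orthonormal ℝ y)
    (a : H₁) (b : H₂) : Summable fun i => |⟪a, x i⟫ * ⟪b, y i⟫| :=
  summable_of_sum_le (fun _ => abs_nonneg _) (hx.sum_abs_inner_mul_inner_le hy a b)

theorem Orthonormal.tsum_abs_inner_mul_inner_le (hx : Orthonormal ℝ x) (hy : Orthonormal ℝ y)
    (a : H₁) (b : H₂) : ∑' i, |⟪a, x i⟫ * ⟪b, y i⟫| ≤ ‖a‖ * ‖b‖ :=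
  Real.tsum_le_of_sum_le (fun _ => abs_nonneg _) (hx.sum_abs_inner_mul_inner_le hy a b)

end Bessel

section DiagonalSeries

variable {ι H₁ H₂ K : Type*} [NormedAddCommGroup H₁] [InnerProductSpace ℝ H₁]
  [NormedAddCommGroup H₂] [InnerProductSpace ℝ H₂] [NormedAddCommGroup K] [NormedSpace ℝ K]
  [CompleteSpace K] {x : ι → H₁} {y : ι → H₂} {τ : ι → ℝ} {z : ι → K}

theorem exists_continuousBilinear_hasSum (hx : Orthonormal ℝ x) (hy : Orthonormal ℝ y)
    {M : ℝ} (hM : 0 ≤ M) (hτ : ∀ i, ‖τ i‖ ≤ M) (hz : ∀ i, ‖z i‖ ≤ 1) :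
    ∃ T : H₁ →L[ℝ] H₂ →L[ℝ] K,
      ∀ a b, HasSum (fun i => (τ i * ⟪a, x i⟫ * ⟪b, y i⟫) • z i) (T a b) := by
  set f : H₁ → H₂ → ι → K := fun a b i => (τ i * ⟪a, x i⟫ * ⟪b, y i⟫) • z i
  have hf_le : ∀ a b i, ‖f a b i‖ ≤ M * |⟪a, x i⟫ * ⟪b, y i⟫| := fun a b i =>
    calc ‖f a b i‖ = ‖τ i‖ * |⟪a, x i⟫ * ⟪b, y i⟫| * ‖z i‖ := by
          simp only [f, norm_smul, Real.norm_eq_abs, abs_mul, mul_assoc]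
      _ ≤ M * |⟪a, x i⟫ * ⟪b, y i⟫| * 1 := by gcongr; exacts [hτ i, hz i]
      _ = M * |⟪a, x i⟫ * ⟪b, y i⟫| := mul_one _
  have hf : ∀ a b, Summable (f a b) := fun a b =>
    .of_norm_bounded ((hx.summable_abs_inner_mul_inner hy a b).mul_left M) (hf_le a b)
  let B : H₁ →ₗ[ℝ] H₂ →ₗ[ℝ] K := LinearMap.mk₂ ℝ (fun a b => ∑' i, f a b i)
    (fun a a' b => by
      simp only [f, inner_add_left, mul_add, add_mul, add_smul]
      exact (hf a b).tsum_add (hf a' b))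
    (fun c a b => by
      simp only [f, real_inner_smul_left, ← (hf a b).tsum_const_smul c, smul_smul]
      exact tsum_congr fun i => by ring_nf)
    (fun a b b' => by
      simp only [f, inner_add_left, mul_add, add_smul]
      exact (hf a b).tsum_add (hf a b'))
    (fun c a b => by
      simp only [f, real_inner_smul_left, ← (hf a b).tsum_const_smul c, smul_smul]
      exact tsum_congr fun i => by ring_nf)
  refine ⟨B.mkContinuous₂ M fun a b => ?_, fun a b => (hf a b).hasSum⟩
  calc ‖∑' i, f a b i‖ ≤ ∑' i, M * |⟪a, x i⟫ * ⟪b, y i⟫| :=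
        tsum_of_norm_bounded ((hx.summable_abs_inner_mul_inner hy a b).mul_left M).hasSum
          (hf_le a b)
    _ = M * ∑' i, |⟪a, x i⟫ * ⟪b, y i⟫| := tsum_mul_left
    _ ≤ M * (‖a‖ * ‖b‖) := by gcongr; exact hx.tsum_abs_inner_mul_inner_le hy a b
    _ = M * ‖a‖ * ‖b‖ := (mul_assoc _ _ _).symm

theorem isCompact_closure_image_closedBall_of_hasSum (hx : Orthonormal ℝ x)
    (hy : Orthonormal ℝ y) (hτ : Tendsto τ cofinite (nhds 0)) (hz : ∀ i, ‖z i‖ ≤ 1)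
    {T : H₁ → H₂ → K}
    (hT : ∀ a b, HasSum (fun i => (τ i * ⟪a, x i⟫ * ⟪b, y i⟫) • z i) (T a b)) :
    IsCompact (closure ((fun p : H₁ × H₂ => T p.1 p.2) ''
      (Metric.closedBall 0 1 ×ˢ Metric.closedBall 0 1))) := by
  set C : Set K := insert 0 (Set.range fun i => τ i • z i)
  have hτz : Tendsto (fun i => τ i • z i) cofinite (nhds 0) :=
    squeeze_zero_norm (fun i => (norm_smul _ _).trans_le
      (mul_le_of_le_one_right (norm_nonneg _) (hz i))) (tendsto_zero_iff_norm_tendsto_zero.1 hτ)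
  have hC : IsCompact C := hτz.isCompact_insert_range_of_cofinite
  have hhull : IsCompact (closure (convexHull ℝ (C ∪ -C))) :=
    (totallyBounded_convexHull.2 (hC.union hC.neg).totallyBounded).closure.isCompact_of_isClosed
      isClosed_closure
  refine hhull.closure_of_subset ?_
  rintro _ ⟨⟨a, b⟩, ⟨ha, hb⟩, rfl⟩
  rw [mem_closedBall_zero_iff] at ha hb
  refine mem_closure_of_tendsto (hT a b) (Eventually.of_forall fun s => ?_)
  have hs : ∑ i ∈ s, (τ i * ⟪a, x i⟫ * ⟪b, y i⟫) • z i =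
      ∑ i ∈ s, (⟪a, x i⟫ * ⟪b, y i⟫) • τ i • z i :=
    Finset.sum_congr rfl fun i _ => by rw [smul_smul, mul_comm _ (τ i), mul_assoc]
  rw [hs]
  exact sum_smul_mem_convexHull_union_neg (Set.mem_insert _ _)
    (fun i _ => Set.mem_insert_of_mem _ ⟨i, rfl⟩)
    ((hx.sum_abs_inner_mul_inner_le hy a b s).trans (mul_le_one₀ ha (norm_nonneg b) hb))

end DiagonalSeries

theorem stmt_11_general {H₁ H₂ K : Type*}
    [NormedAddCommGroup H₁] [InnerProductSpace ℝ H₁]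
    [NormedAddCommGroup H₂] [InnerProductSpace ℝ H₂]
    [NormedAddCommGroup K] [InnerProductSpace ℝ K] [CompleteSpace K]
    (τ : ℕ → ℝ) (hτ : Filter.Tendsto τ Filter.atTop (nhds 0))
    (x : ℕ → H₁) (y : ℕ → H₂) (z : ℕ → K)
    (hx : Orthonormal ℝ x) (hy : Orthonormal ℝ y) (hz : Orthonormal ℝ z) :
    ∃ T : H₁ →L[ℝ] H₂ →L[ℝ] K,
      (∀ (a : H₁) (b : H₂),
        HasSum (fun i => (τ i * ⟪a, x i⟫ * ⟪b, y i⟫) • z i) (T a b)) ∧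
      IsCompact (closure ((fun p : H₁ × H₂ => T p.1 p.2) ''
        (Metric.closedBall 0 1 ×ˢ Metric.closedBall 0 1))) := by
  obtain ⟨M, hM⟩ := hτ.norm.bddAbove_range
  have hτM : ∀ i, ‖τ i‖ ≤ M := fun i => hM ⟨i, rfl⟩
  have hz₁ : ∀ i, ‖z i‖ ≤ 1 := fun i => (hz.1 i).le
  obtain ⟨T, hT⟩ :=
    exists_continuousBilinear_hasSum hx hy ((norm_nonneg _).trans (hτM 0)) hτM hz₁
  refine ⟨T, hT, isCompact_closure_image_closedBall_of_hasSum (T := fun a b => T a b)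
    hx hy ?_ hz₁ hT⟩
  rwa [Nat.cofinite_eq_atTop]

theorem stmt_11 {H₁ H₂ K : Type*}
    [NormedAddCommGroup H₁] [InnerProductSpace ℝ H₁] [CompleteSpace H₁]
    [TopologicalSpace.SeparableSpace H₁]
    [NormedAddCommGroup H₂] [InnerProductSpace ℝ H₂] [CompleteSpace H₂]
    [TopologicalSpace.SeparableSpace H₂]
    [NormedAddCommGroup K] [InnerProductSpace ℝ K] [CompleteSpace K]
    [TopologicalSpace.SeparableSpace K]
    (τ : ℕ → ℝ) (hτ0 : ∀ i, 0 ≤ τ i) (hτ : Filter.Tendsto τ Filter.atTop (nhds 0))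
    (x : ℕ → H₁) (y : ℕ → H₂) (z : ℕ → K)
    (hx : Orthonormal ℝ x) (hy : Orthonormal ℝ y) (hz : Orthonormal ℝ z) :
    ∃ T : H₁ →L[ℝ] H₂ →L[ℝ] K,
      (∀ (a : H₁) (b : H₂),
        HasSum (fun i => (τ i * ⟪a, x i⟫ * ⟪b, y i⟫) • z i) (T a b)) ∧
      IsCompact (closure ((fun p : H₁ × H₂ => T p.1 p.2) ''
        (Metric.closedBall 0 1 ×ˢ Metric.closedBall 0 1))) :=
  stmt_11_general τ hτ x y z hx hy hz
end

section
/- Suppose T : H₁ × H₂ → K has a Schmidt representation T(x,y) = Σᵢ τᵢ⟨x,xᵢ⟩⟨y,yᵢ⟩zᵢ with (τᵢ) ∈ c₀ nonnegative and (xᵢ), (yᵢ), (zᵢ) orthonormal sequences. Then for each n with τₙ > 0, τₙ is an ordered singular value of T with ordered singular vectors (xₙ, yₙ, zₙ): i.e., T(xₙ,yₙ) = τₙzₙ, φ₁(yₙ)*(zₙ) = τₙxₙ, φ₂(xₙ)*(zₙ) = τₙyₙ, and for all x ∈ H₁, y ∈ H₂: T(x,yₙ) = τₙ⟨x,xₙ⟩zₙ,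 T(xₙ,y) = τₙ⟨y,yₙ⟩zₙ, φ₁(y)*(zₙ) = τₙ⟨y,yₙ⟩xₙ. -/
open scoped RealInnerProductSpace

theorem stmt_12 {H₁ H₂ K : Type*}
    [NormedAddCommGroup H₁] [InnerProductSpace ℝ H₁] [CompleteSpace H₁]
    [TopologicalSpace.SeparableSpace H₁]
    [NormedAddCommGroup H₂] [InnerProductSpace ℝ H₂] [CompleteSpace H₂]
    [TopologicalSpace.SeparableSpace H₂]
    [NormedAddCommGroup K] [InnerProductSpace ℝ K] [CompleteSpace K]
    [TopologicalSpace.SeparableSpace K]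
    (T : H₁ →L[ℝ] H₂ →L[ℝ] K)
    (τ : ℕ → ℝ) (hτ0 : ∀ i, 0 ≤ τ i) (hτ : Filter.Tendsto τ Filter.atTop (nhds 0))
    (x : ℕ → H₁) (y : ℕ → H₂) (z : ℕ → K)
    (hx : Orthonormal ℝ x) (hy : Orthonormal ℝ y) (hz : Orthonormal ℝ z)
    (hrep : ∀ (a : H₁) (b : H₂),
      HasSum (fun i => (τ i * ⟪a, x i⟫ * ⟪b, y i⟫) • z i) (T a b)) :
    ∀ n, 0 < τ n →
      T (x n) (y n) = τ n • z n ∧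
      ContinuousLinearMap.adjoint (T.flip (y n)) (z n) = τ n • x n ∧
      ContinuousLinearMap.adjoint (T (x n)) (z n) = τ n • y n ∧
      (∀ a : H₁, T a (y n) = (τ n * ⟪a, x n⟫) • z n) ∧
      (∀ b : H₂, T (x n) b = (τ n * ⟪b, y n⟫) • z n) ∧
      (∀ b : H₂, ContinuousLinearMap.adjoint (T.flip b) (z n) = (τ n * ⟪b, y n⟫) • x n) := by
  classical
  intro n hn
  have hxi := orthonormal_iff_ite.mp hx
  have hyi := orthonormal_iff_ite.mp hy
  have hzi := orthonormal_iff_ite.mp hz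
  -- key inner-product identity
  have key : ∀ (a : H₁) (b : H₂), ⟪z n, T a b⟫ = τ n * ⟪a, x n⟫ * ⟪b, y n⟫ := by
    intro a b
    have h := (hrep a b).mapL (innerSL ℝ (z n))
    have h2 : HasSum (fun i => (innerSL ℝ (z n)) ((τ i * ⟪a, x i⟫ * ⟪b, y i⟫) • z i))
        (τ n * ⟪a, x n⟫ * ⟪b, y n⟫) := by
      have := hasSum_ite_eq n (τ n * ⟪a, x n⟫ * ⟪b, y n⟫)
      refine this.congr_fun fun i => ?_
      simp only [innerSL_apply_apply, inner_smul_right, hzi n i]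
      by_cases hni : n = i
      · subst hni; simp
      · simp [hni, eq_comm]
    have := h.unique h2
    simpa using this
  have hTy : ∀ a : H₁, T a (y n) = (τ n * ⟪a, x n⟫) • z n := by
    intro a
    have h := hrep a (y n)
    have h2 : HasSum (fun i => (τ i * ⟪a, x i⟫ * ⟪y n, y i⟫) • z i)
        ((τ n * ⟪a, x n⟫) • z n) := by
      have := hasSum_ite_eq n ((τ n * ⟪a, x n⟫) • z n)
      refine this.congr_fun fun i => ?_
      rw [hyi n i]
      by_cases hni : n = i
      · subst hni; simp
      · simp [hni, eq_comm]
    exact h.unique h2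
  have hTx : ∀ b : H₂, T (x n) b = (τ n * ⟪b, y n⟫) • z n := by
    intro b
    have h := hrep (x n) b
    have h2 : HasSum (fun i => (τ i * ⟪x n, x i⟫ * ⟪b, y i⟫) • z i)
        ((τ n * ⟪b, y n⟫) • z n) := by
      have := hasSum_ite_eq n ((τ n * ⟪b, y n⟫) • z n)
      refine this.congr_fun fun i => ?_
      rw [hxi n i]
      by_cases hni : n = i
      · subst hni; simp
      · simp [hni, eq_comm]
    exact h.unique h2
  have hadj : ∀ b : H₂,
      ContinuousLinearMap.adjoint (T.flip b) (z n) = (τ n * ⟪b, y n⟫) • x n := by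
    intro b
    apply ext_inner_right ℝ
    intro a
    rw [ContinuousLinearMap.adjoint_inner_left]
    simp only [ContinuousLinearMap.flip_apply]
    rw [key a b, real_inner_smul_left, real_inner_comm (x n) a]
    ring
  have hadj2 : ContinuousLinearMap.adjoint (T (x n)) (z n) = τ n • y n := by
    apply ext_inner_right ℝ
    intro b
    rw [ContinuousLinearMap.adjoint_inner_left, key (x n) b, real_inner_smul_left]
    rw [show ⟪x n, x n⟫ = 1 by simpa using hxi n n, real_inner_comm (y n) b]
    ring
  refine ⟨?_, ?_, hadj2, hTy, hTx, hadj⟩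
  · rw [hTy (x n), show ⟪x n, x n⟫ = 1 by simpa using hxi n n, mul_one]
  · rw [hadj (y n), show ⟪y n, y n⟫ = 1 by simpa using hyi n n, mul_one]
end

section
/- Let T : H × H → H be a compact self-adjoint symmetric bilinear operator possessing a Schmidt representation T(x,y) = Σⱼ τⱼ⟨x,xⱼ⟩⟨y,yⱼ⟩zⱼ where each nonzero τⱼ is an ordered singular value with ordered unit singular vectors (xⱼ, yⱼ, zⱼ). Then for each j with τⱼ > 0, yⱼ = ±xⱼ and zⱼ = ±xⱼ, and there exist signs εⱼ ∈ {±1} such that T(x,y) = Σⱼ εⱼτⱼ⟨x,xⱼ⟩⟨y,xⱼ⟩xⱼ for all x,y ∈ H (a Schur representation). -/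
open scoped RealInnerProductSpace

/-!
Fix `j` with `τ j > 0`. By the singular-triple conditions, `b ↦ T (x j) b` and `a ↦ T a (y j)` are
the rank-one maps `b ↦ τ j ⟪b, y j⟫ z j` and `a ↦ τ j ⟪a, x j⟫ z j`. A rank-one map
`b ↦ t ⟪b, v⟫ w` between unit vectors is symmetric at `(v, w)` only if `⟪v, w⟫² = 1`, i.e.
`w = ±v` by the equality case of Cauchy–Schwarz. The two self-adjointness conditions thus give
`z j = ±y j` and `z j = ±x j`, hence `y j = ±x j`, and substituting into the Schmidt
representation yields the Schur representation with `ε j = ⟪y j, x j⟫ ⟪z j, x j⟫`.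
-/

theorem eq_or_eq_neg_of_eq_or_eq_neg {G : Type*} [AddGroup G] {u v w : G} (hwv : w = v ∨ w = -v) (hwu : w = u ∨ w = -u) :
    v = u ∨ v = -u := by
  rcases hwv with rfl | rfl <;> rcases hwu with h | h
  · exact .inl h
  · exact .inr h
  · exact .inr (neg_eq_iff_eq_neg.mp h)
  · exact .inl (neg_injective h)

section UnitVectors

variable {H : Type*} [NormedAddCommGroup H] [InnerProductSpace ℝ H] {u v w : H}

theorem eq_or_eq_neg_of_real_inner_mul_self_eq_one (hv : ‖v‖ = 1) (hw : ‖w‖ = 1)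
    (h : ⟪v, w⟫ * ⟪v, w⟫ = 1) : w = v ∨ w = -v := by
  rcases mul_self_eq_one_iff.mp h with h | h
  · exact .inl ((inner_eq_one_iff_of_norm_eq_one hv hw).mp h).symm
  · exact .inr (neg_eq_iff_eq_neg.mp ((inner_eq_neg_one_iff_of_norm_eq_one hv hw).mp h).symm)

theorem eq_or_eq_neg_of_symmetric_rankOne {A : H → H} {t : ℝ} (ht : t ≠ 0)
    (hv : ‖v‖ = 1) (hw : ‖w‖ = 1) (hA : ∀ b, A b = (t * ⟪b, v⟫) • w)
    (hsymm : ⟪A v, w⟫ = ⟪v, A w⟫) : w = v ∨ w = -v := by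
  refine eq_or_eq_neg_of_real_inner_mul_self_eq_one hv hw (mul_left_cancel₀ ht ?_)
  rw [hA, hA, real_inner_smul_left, real_inner_smul_right, real_inner_self_eq_norm_sq,
    real_inner_self_eq_norm_sq, hv, hw, real_inner_comm v w] at hsymm
  linear_combination -hsymm

theorem real_inner_eq_one_or_neg_one_of_eq_or_eq_neg (hu : ‖u‖ = 1) (h : v = u ∨ v = -u) :
    ⟪v, u⟫ = 1 ∨ ⟪v, u⟫ = -1 := by
  rcases h with rfl | rfl <;> simp [inner_neg_left, hu]

theorem eq_real_inner_smul_of_eq_or_eq_neg (hu : ‖u‖ = 1) (h : v = u ∨ v = -u) :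
    v = ⟪v, u⟫ • u := by
  rcases h with rfl | rfl <;> simp [inner_neg_left, hu]

end UnitVectors

theorem stmt_15_general {H : Type*}
    [NormedAddCommGroup H] [InnerProductSpace ℝ H] [CompleteSpace H]
    (T : H →L[ℝ] H →L[ℝ] H)
    (hsa1 : ∀ x y z : H, ⟪T x y, z⟫ = ⟪y, T x z⟫)
    (hsa2 : ∀ x y z : H, ⟪T y x, z⟫ = ⟪y, T z x⟫)
    (τ : ℕ → ℝ) (hτ0 : ∀ j, 0 ≤ τ j)
    (x y z : ℕ → H)
    (hx : Orthonormal ℝ x) (hy : Orthonormal ℝ y) (hz : Orthonormal ℝ z)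
    (hrep : ∀ (a b : H), HasSum (fun j => (τ j * ⟪a, x j⟫ * ⟪b, y j⟫) • z j) (T a b))
    (hsing : ∀ j, 0 < τ j →
      T (x j) (y j) = τ j • z j ∧
      ContinuousLinearMap.adjoint (T.flip (y j)) (z j) = τ j • x j ∧
      ContinuousLinearMap.adjoint (T (x j)) (z j) = τ j • y j ∧
      (∀ a : H, T a (y j) = (τ j * ⟪a, x j⟫) • z j) ∧
      (∀ b : H, T (x j) b = (τ j * ⟪b, y j⟫) • z j) ∧
      (∀ b : H, ContinuousLinearMap.adjoint (T.flip b) (z j) = (τ j * ⟪b, y j⟫) • x j)) :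
    (∀ j, 0 < τ j → (y j = x j ∨ y j = -x j) ∧ (z j = x j ∨ z j = -x j)) ∧
    ∃ ε : ℕ → ℝ, (∀ j, ε j = 1 ∨ ε j = -1) ∧
      ∀ (a b : H),
        HasSum (fun j => (ε j * τ j * ⟪a, x j⟫ * ⟪b, x j⟫) • x j) (T a b) := by
  have hsign : ∀ j, 0 < τ j → (y j = x j ∨ y j = -x j) ∧ (z j = x j ∨ z j = -x j) := by
    intro j hj
    obtain ⟨-, -, -, hTy, hTx, -⟩ := hsing j hj
    have hzy := eq_or_eq_neg_of_symmetric_rankOne (A := T (x j)) hj.ne' (hy.1 j) (hz.1 j)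
      hTx (hsa1 (x j) (y j) (z j))
    have hzx := eq_or_eq_neg_of_symmetric_rankOne (A := fun a => T a (y j)) hj.ne' (hx.1 j)
      (hz.1 j) hTy (hsa2 (y j) (x j) (z j))
    exact ⟨eq_or_eq_neg_of_eq_or_eq_neg hzy hzx, hzx⟩
  refine ⟨hsign, fun j => if 0 < τ j then ⟪y j, x j⟫ * ⟪z j, x j⟫ else 1, fun j => ?_,
    fun a b => ?_⟩
  · dsimp only
    split_ifs with hj
    · obtain ⟨hyx, hzx⟩ := hsign j hj
      rcases real_inner_eq_one_or_neg_one_of_eq_or_eq_neg (hx.1 j) hyx with h | h <;>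
        rcases real_inner_eq_one_or_neg_one_of_eq_or_eq_neg (hx.1 j) hzx with h' | h' <;>
        simp [h, h']
    · exact .inl rfl
  · convert hrep a b using 2 with j
    dsimp only
    split_ifs with hj
    · obtain ⟨hyx, hzx⟩ := hsign j hj
      conv_rhs => rw [eq_real_inner_smul_of_eq_or_eq_neg (hx.1 j) hyx,
        eq_real_inner_smul_of_eq_or_eq_neg (hx.1 j) hzx, real_inner_smul_right, smul_smul]
      ring_nf
    · simp [le_antisymm (not_lt.mp hj) (hτ0 j)]

theorem stmt_15 {H : Type*}
    [NormedAddCommGroup H] [InnerProductSpace ℝ H] [CompleteSpace H]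
    [TopologicalSpace.SeparableSpace H]
    (T : H →L[ℝ] H →L[ℝ] H)
    (hcompact : IsCompact (closure ((fun p : H × H => T p.1 p.2) ''
      (Metric.closedBall 0 1 ×ˢ Metric.closedBall 0 1))))
    (hsymm : ∀ x y : H, T x y = T y x)
    (hsa1 : ∀ x y z : H, ⟪T x y, z⟫ = ⟪y, T x z⟫)
    (hsa2 : ∀ x y z : H, ⟪T y x, z⟫ = ⟪y, T z x⟫)
    (τ : ℕ → ℝ) (hτ0 : ∀ j, 0 ≤ τ j) (hτ : Filter.Tendsto τ Filter.atTop (nhds 0))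
    (x y z : ℕ → H)
    (hx : Orthonormal ℝ x) (hy : Orthonormal ℝ y) (hz : Orthonormal ℝ z)
    (hrep : ∀ (a b : H), HasSum (fun j => (τ j * ⟪a, x j⟫ * ⟪b, y j⟫) • z j) (T a b))
    (hsing : ∀ j, 0 < τ j →
      T (x j) (y j) = τ j • z j ∧
      ContinuousLinearMap.adjoint (T.flip (y j)) (z j) = τ j • x j ∧
      ContinuousLinearMap.adjoint (T (x j)) (z j) = τ j • y j ∧
      (∀ a : H, T a (y j) = (τ j * ⟪a, x j⟫) • z j) ∧
      (∀ b : H, T (x j) b = (τ j * ⟪b, y j⟫) • z j) ∧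
      (∀ b : H, ContinuousLinearMap.adjoint (T.flip b) (z j) = (τ j * ⟪b, y j⟫) • x j)) :
    (∀ j, 0 < τ j → (y j = x j ∨ y j = -x j) ∧ (z j = x j ∨ z j = -x j)) ∧
    ∃ ε : ℕ → ℝ, (∀ j, ε j = 1 ∨ ε j = -1) ∧
      ∀ (a b : H),
        HasSum (fun j => (ε j * τ j * ⟪a, x j⟫ * ⟪b, x j⟫) • x j) (T a b) :=
  stmt_15_general T hsa1 hsa2 τ hτ0 x y z hx hy hz hrep hsing
end

section
/- Every Hilbert-Schmidt bilinear operator T : H₁ × H₂ → K is compact (the image of the product of closed unit balls is precompact in K). -/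
/-!
Expanding `x` and `y` in the two bases writes `T x y` as `∑ cₚ • T (u i) (v j)` over
`p = (i, j)`, with coefficients `cₚ = ⟪u i, x⟫ ⟪v j, y⟫` of ℓ²-norm `‖x‖ ‖y‖ ≤ 1`. For a
square-summable family `w`, the sums `∑ cₚ • wₚ` with `‖c‖₂ ≤ 1` form a totally bounded set: by
Cauchy–Schwarz, dropping the indices outside a finite set that carries all but `ε²` of
`∑ ‖wₚ‖²` moves each sum by at most `ε`, and the truncated sums range over the continuous image
of a compact box of coefficients.
-/

open Metric Set

section CauchySchwarz

variable {ι 𝕜 E : Type*} [NormedField 𝕜] [SeminormedAddCommGroup E] [NormedSpace 𝕜 E]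
  {c : ι → 𝕜} {w : ι → E}

theorem summable_norm_smul_of_summable_sq (hc : Summable fun p => ‖c p‖ ^ 2)
    (hw : Summable fun p => ‖w p‖ ^ 2) : Summable fun p => ‖c p • w p‖ := by
  simp_rw [norm_smul]
  exact Real.summable_mul_of_Lp_Lq_of_nonneg .two_two (fun _ => norm_nonneg _)
    (fun _ => norm_nonneg _) (by simpa only [Real.rpow_two] using hc)
    (by simpa only [Real.rpow_two] using hw)

theorem norm_tsum_smul_le (hc : Summable fun p => ‖c p‖ ^ 2)
    (hw : Summable fun p => ‖w p‖ ^ 2) :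
    ‖∑' p, c p • w p‖ ≤ √(∑' p, ‖c p‖ ^ 2) * √(∑' p, ‖w p‖ ^ 2) :=
  calc ‖∑' p, c p • w p‖ ≤ ∑' p, ‖c p‖ * ‖w p‖ := by
        simpa only [norm_smul] using
          norm_tsum_le_tsum_norm (summable_norm_smul_of_summable_sq hc hw)
    _ ≤ _ := by
        simpa only [Real.rpow_two, Real.sqrt_eq_rpow, one_div] using
          Real.inner_le_Lp_mul_Lq_tsum_of_nonneg .two_two (fun p => norm_nonneg (c p))
            (fun p => norm_nonneg (w p)) (by simpa only [Real.rpow_two] using hc)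
            (by simpa only [Real.rpow_two] using hw)

end CauchySchwarz

theorem Metric.totallyBounded_of_forall_exists_dist_le {α : Type*} [PseudoMetricSpace α]
    {s : Set α} (h : ∀ ε > 0, ∃ t, TotallyBounded t ∧ ∀ x ∈ s, ∃ y ∈ t, dist x y ≤ ε) :
    TotallyBounded s := by
  refine totallyBounded_iff.2 fun ε hε => ?_
  obtain ⟨t, ht, hst⟩ := h (ε / 2) (half_pos hε)
  obtain ⟨F, hF, htF⟩ := totallyBounded_iff.1 ht (ε / 2) (half_pos hε)
  refine ⟨F, hF, fun x hx => ?_⟩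
  obtain ⟨y, hy, hxy⟩ := hst x hx
  obtain ⟨z, hz, hyz⟩ := mem_iUnion₂.1 (htF hy)
  exact mem_iUnion₂.2 ⟨z, hz, mem_ball.2 (by linarith [mem_ball.1 hyz, dist_triangle x y z])⟩

theorem totallyBounded_setOf_hasSum_smul {ι 𝕜 E : Type*} [NontriviallyNormedField 𝕜]
    [ProperSpace 𝕜] [NormedAddCommGroup E] [NormedSpace 𝕜 E] [CompleteSpace E]
    (w : ι → E) (hw : Summable fun p => ‖w p‖ ^ 2) :
    TotallyBounded {z : E | ∃ c : ι → 𝕜, Summable (fun p => ‖c p‖ ^ 2) ∧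
      ∑' p, ‖c p‖ ^ 2 ≤ 1 ∧ HasSum (fun p => c p • w p) z} := by
  refine totallyBounded_of_forall_exists_dist_le fun ε hε => ?_
  obtain ⟨s, hs⟩ : ∃ s : Finset ι, ∑' p : {p // p ∉ s}, ‖w p‖ ^ 2 < ε ^ 2 :=
    ((tendsto_tsum_compl_atTop_zero fun p => ‖w p‖ ^ 2).eventually
      (gt_mem_nhds (pow_pos hε 2))).exists
  refine ⟨(fun c : ι → 𝕜 => ∑ p ∈ s, c p • w p) '' univ.pi fun _ => closedBall 0 1,
    ((isCompact_univ_pi fun _ => isCompact_closedBall 0 1).image (by fun_prop)).totallyBounded,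
    ?_⟩
  rintro z ⟨c, hc, hc_le, hz⟩
  have hc_norm_le (p : ι) : ‖c p‖ ≤ 1 :=
    (sq_le_one_iff₀ (norm_nonneg _)).1 <|
      (hc.le_tsum p fun _ _ => sq_nonneg _).trans hc_le
  refine ⟨_, ⟨c, fun p _ => mem_closedBall_zero_iff.2 (hc_norm_le p), rfl⟩, ?_⟩
  rw [dist_eq_norm, ← hz.tsum_eq, ← hz.summable.sum_add_tsum_compl (s := s), add_sub_cancel_left]
  calc _ ≤ √(∑' p : {p // p ∉ s}, ‖c p‖ ^ 2) * √(∑' p : {p // p ∉ s}, ‖w p‖ ^ 2) :=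
        norm_tsum_smul_le (hc.subtype _) (hw.subtype _)
    _ ≤ 1 * ε := by
        gcongr
        · exact Real.sqrt_le_one.2 ((hc.tsum_subtype_le _ _ fun _ => sq_nonneg _).trans hc_le)
        · exact (Real.sqrt_le_sqrt hs.le).trans_eq (Real.sqrt_sq hε.le)
    _ = ε := one_mul ε

section HilbertBasis

variable {𝕜 ι₁ ι₂ E₁ E₂ F : Type*} [RCLike 𝕜]
  [NormedAddCommGroup E₁] [InnerProductSpace 𝕜 E₁]
  [NormedAddCommGroup E₂] [InnerProductSpace 𝕜 E₂]

theorem HilbertBasis.hasSum_norm_repr_sq (b : HilbertBasis ι₁ 𝕜 E₁) (x : E₁) :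
    HasSum (fun i => ‖b.repr x i‖ ^ 2) (‖x‖ ^ 2) := by
  simpa using lp.hasSum_norm (p := 2) (by norm_num) (b.repr x)

theorem HilbertBasis.hasSum_norm_repr_mul_repr_sq (u : HilbertBasis ι₁ 𝕜 E₁)
    (v : HilbertBasis ι₂ 𝕜 E₂) (x : E₁) (y : E₂) :
    HasSum (fun p : ι₁ × ι₂ => ‖u.repr x p.1 * v.repr y p.2‖ ^ 2) (‖x‖ ^ 2 * ‖y‖ ^ 2) := by
  have hx := u.hasSum_norm_repr_sq x
  have hy := v.hasSum_norm_repr_sq y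
  have := hx.mul hy (hx.summable.mul_of_nonneg hy.summable (fun _ => sq_nonneg _)
    (fun _ => sq_nonneg _))
  simpa only [norm_mul, mul_pow] using this

theorem HilbertBasis.hasSum_repr_mul_repr_smul_apply [NormedAddCommGroup F] [NormedSpace 𝕜 F]
    [CompleteSpace F] (T : E₁ →L[𝕜] E₂ →L[𝕜] F) (u : HilbertBasis ι₁ 𝕜 E₁)
    (v : HilbertBasis ι₂ 𝕜 E₂) (hT : Summable fun p : ι₁ × ι₂ => ‖T (u p.1) (v p.2)‖ ^ 2)
    (x : E₁) (y : E₂) :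
    HasSum (fun p : ι₁ × ι₂ => (u.repr x p.1 * v.repr y p.2) • T (u p.1) (v p.2)) (T x y) := by
  have hsummable := (summable_norm_smul_of_summable_sq
    (u.hasSum_norm_repr_mul_repr_sq v x y).summable hT).of_norm
  have hfiber (i : ι₁) : HasSum (fun j => (u.repr x i * v.repr y j) • T (u i) (v j))
      (u.repr x i • T (u i) y) := by
    simpa only [map_smul, smul_smul] using
      ((v.hasSum_repr y).mapL (T (u i))).const_smul (u.repr x i)
  have houter : HasSum (fun i => u.repr x i • T (u i) y) (T x y) := by
    simpa only [map_smul, ContinuousLinearMap.flip_apply] using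
      (u.hasSum_repr x).mapL (T.flip y)
  exact houter.unique (hsummable.hasSum.prod_fiberwise hfiber) ▸ hsummable.hasSum

end HilbertBasis

theorem stmt_18_general {H₁ H₂ K : Type*}
    [NormedAddCommGroup H₁] [InnerProductSpace ℝ H₁]
    [NormedAddCommGroup H₂] [InnerProductSpace ℝ H₂]
    [NormedAddCommGroup K] [InnerProductSpace ℝ K] [CompleteSpace K]
    (T : H₁ →L[ℝ] H₂ →L[ℝ] K)
    {ι₁ ι₂ : Type*}
    (u : HilbertBasis ι₁ ℝ H₁) (v : HilbertBasis ι₂ ℝ H₂)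
    (hsum : Summable fun p : ι₁ × ι₂ => ‖T (u p.1) (v p.2)‖ ^ 2) :
    IsCompact (closure ((fun p : H₁ × H₂ => T p.1 p.2) ''
      (Metric.closedBall 0 1 ×ˢ Metric.closedBall 0 1))) := by
  refine TotallyBounded.isCompact_of_isClosed ?_ isClosed_closure
  refine TotallyBounded.closure <| (totallyBounded_setOf_hasSum_smul (𝕜 := ℝ) _ hsum).subset ?_
  rintro _ ⟨⟨x, y⟩, ⟨hx, hy⟩, rfl⟩
  have hcoeff := u.hasSum_norm_repr_mul_repr_sq v x y
  refine ⟨_, hcoeff.summable, ?_, u.hasSum_repr_mul_repr_smul_apply T v hsum x y⟩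
  rw [mem_closedBall_zero_iff] at hx hy
  rw [hcoeff.tsum_eq]
  exact mul_le_one₀ (pow_le_one₀ (norm_nonneg x) hx) (sq_nonneg _) (pow_le_one₀ (norm_nonneg y) hy)

theorem stmt_18 {H₁ H₂ K : Type*}
    [NormedAddCommGroup H₁] [InnerProductSpace ℝ H₁] [CompleteSpace H₁]
    [TopologicalSpace.SeparableSpace H₁]
    [NormedAddCommGroup H₂] [InnerProductSpace ℝ H₂] [CompleteSpace H₂]
    [TopologicalSpace.SeparableSpace H₂]
    [NormedAddCommGroup K] [InnerProductSpace ℝ K] [CompleteSpace K]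
    [TopologicalSpace.SeparableSpace K]
    (T : H₁ →L[ℝ] H₂ →L[ℝ] K)
    {ι₁ ι₂ : Type*}
    (u : HilbertBasis ι₁ ℝ H₁) (v : HilbertBasis ι₂ ℝ H₂)
    (hsum : Summable fun p : ι₁ × ι₂ => ‖T (u p.1) (v p.2)‖ ^ 2) :
    IsCompact (closure ((fun p : H₁ × H₂ => T p.1 p.2) ''
      (Metric.closedBall 0 1 ×ˢ Metric.closedBall 0 1))) :=
  stmt_18_general T u v hsum
end

section
/- Suppose T : H₁ × H₂ → K has a Schmidt representation T(x,y) = Σᵢ τᵢ⟨x,xᵢ⟩⟨y,yᵢ⟩zᵢ with orthonormal sequences (xᵢ), (yᵢ), (zᵢ) and (τᵢ) ∈ ℓ². Then T is a Hilbert-Schmidt bilinear operator, and moreover Σₘ Σₙ ‖T(uₘ,vₙ)‖² = Σₛ τₛ² for any orthonormal bases (uₘ) of H₁ and (vₙ) of H₂. -/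
set_option maxHeartbeats 1000000


open scoped RealInnerProductSpace

lemma aux_norm_sq {K : Type*} [NormedAddCommGroup K] [InnerProductSpace ℝ K]
    {z : ℕ → K} (hz : Orthonormal ℝ z) {c : ℕ → ℝ} {s : K}
    (hs : HasSum (fun i => c i • z i) s) :
    HasSum (fun i => c i ^ 2) (‖s‖ ^ 2) := by
  have hij : ∀ i j, ⟪z i, z j⟫ = if i = j then (1:ℝ) else 0 :=
    orthonormal_iff_ite.mp hz
  have hcoef : ∀ j, ⟪z j, s⟫ = c j := by
    intro j
    have h1 : HasSum (fun i => ⟪z j, c i • z i⟫) ⟪z j, s⟫ :=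
      hs.mapL (innerSL ℝ (z j))
    have h2 : HasSum (fun i => if i = j then c j else 0) ⟪z j, s⟫ := by
      refine h1.congr_fun fun i => ?_
      rw [real_inner_smul_right, hij j i]
      by_cases h : i = j
      · simp [h]
      · simp [h, Ne.symm h]
    exact ((hasSum_ite_eq j (c j)).unique h2).symm
  have h3 : HasSum (fun i => ⟪c i • z i, s⟫) ⟪s, s⟫ :=
    hs.mapL ((innerSL ℝ).flip s)
  have h4 : HasSum (fun i => c i ^ 2) ⟪s, s⟫ := by
    refine h3.congr_fun fun i => ?_
    rw [real_inner_smul_left, hcoef i, sq]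
  rwa [real_inner_self_eq_norm_sq] at h4

theorem stmt_19 {H₁ H₂ K : Type*}
    [NormedAddCommGroup H₁] [InnerProductSpace ℝ H₁] [CompleteSpace H₁]
    [TopologicalSpace.SeparableSpace H₁]
    [NormedAddCommGroup H₂] [InnerProductSpace ℝ H₂] [CompleteSpace H₂]
    [TopologicalSpace.SeparableSpace H₂]
    [NormedAddCommGroup K] [InnerProductSpace ℝ K] [CompleteSpace K]
    [TopologicalSpace.SeparableSpace K]
    (T : H₁ →L[ℝ] H₂ →L[ℝ] K)
    (τ : ℕ → ℝ) (hτ2 : Summable fun i => τ i ^ 2)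
    (x : ℕ → H₁) (y : ℕ → H₂) (z : ℕ → K)
    (hx : Orthonormal ℝ x) (hy : Orthonormal ℝ y) (hz : Orthonormal ℝ z)
    (hrep : ∀ (a : H₁) (b : H₂),
      HasSum (fun i => (τ i * ⟪a, x i⟫ * ⟪b, y i⟫) • z i) (T a b)) :
    ∀ {ι₁ ι₂ : Type*} (u : HilbertBasis ι₁ ℝ H₁) (v : HilbertBasis ι₂ ℝ H₂),
      Summable (fun p : ι₁ × ι₂ => ‖T (u p.1) (v p.2)‖ ^ 2) ∧
      ∑' p : ι₁ × ι₂, ‖T (u p.1) (v p.2)‖ ^ 2 = ∑' s, τ s ^ 2 := by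
  intro ι₁ ι₂ u v
  set F : ι₁ × ι₂ → ℕ → ℝ := fun p i => (τ i * ⟪u p.1, x i⟫ * ⟪v p.2, y i⟫) ^ 2 with hF
  have hFsum : ∀ p : ι₁ × ι₂, HasSum (F p) (‖T (u p.1) (v p.2)‖ ^ 2) :=
    fun p => aux_norm_sq hz (hrep (u p.1) (v p.2))
  -- fiberwise over i
  have hfiber : ∀ i, HasSum (fun p : ι₁ × ι₂ => F p i) (τ i ^ 2) := by
    intro i
    have hxi : ⟪x i, x i⟫ = (1:ℝ) := by
      rw [real_inner_self_eq_norm_sq, hx.1 i]; norm_num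
    have hyi : ⟪y i, y i⟫ = (1:ℝ) := by
      rw [real_inner_self_eq_norm_sq, hy.1 i]; norm_num
    have hu : HasSum (fun m => ⟪u m, x i⟫ ^ 2) 1 := by
      have h := u.hasSum_inner_mul_inner (x i) (x i)
      rw [hxi] at h
      refine h.congr_fun fun m => ?_
      rw [real_inner_comm (x i) (u m), sq]
    have hv : HasSum (fun n => ⟪v n, y i⟫ ^ 2) 1 := by
      have h := v.hasSum_inner_mul_inner (y i) (y i)
      rw [hyi] at h
      refine h.congr_fun fun n => ?_
      rw [real_inner_comm (y i) (v n), sq]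
    have hmulS : Summable (fun p : ι₁ × ι₂ => ⟪u p.1, x i⟫ ^ 2 * ⟪v p.2, y i⟫ ^ 2) :=
      Summable.mul_of_nonneg hu.summable hv.summable
        (fun _ => sq_nonneg _) (fun _ => sq_nonneg _)
    have hmul := (hu.mul hv hmulS).mul_left (τ i ^ 2)
    simp only [mul_one] at hmul
    refine hmul.congr_fun fun p => ?_
    simp only [hF]; ring
  -- summability over ℕ × (ι₁ × ι₂)
  have hW : Summable (fun q : ℕ × (ι₁ × ι₂) => F q.2 q.1) := by
    rw [summable_prod_of_nonneg (fun q => sq_nonneg _)]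
    refine ⟨fun i => (hfiber i).summable, ?_⟩
    refine hτ2.congr fun i => ?_
    exact ((hfiber i).tsum_eq).symm
  have hW2 : Summable (fun q : (ι₁ × ι₂) × ℕ => F q.1 q.2) := hW.prod_symm
  obtain ⟨hW2a, hW2b⟩ := (summable_prod_of_nonneg
    (f := fun q : (ι₁ × ι₂) × ℕ => F q.1 q.2) (fun q => sq_nonneg _)).mp hW2
  have hsummable : Summable (fun p : ι₁ × ι₂ => ‖T (u p.1) (v p.2)‖ ^ 2) := by
    refine hW2b.congr fun p => ?_
    exact (hFsum p).tsum_eq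
  refine ⟨hsummable, ?_⟩
  have e1 : ∑' p : ι₁ × ι₂, ‖T (u p.1) (v p.2)‖ ^ 2
      = ∑' (p : ι₁ × ι₂) (i : ℕ), F p i :=
    tsum_congr fun p => ((hFsum p).tsum_eq).symm
  have e2 : ∑' q : (ι₁ × ι₂) × ℕ, F q.1 q.2 = ∑' (p : ι₁ × ι₂) (i : ℕ), F p i :=
    Summable.tsum_prod' hW2 fun p => (hFsum p).summable
  have e3 : ∑' q : ℕ × (ι₁ × ι₂), F q.2 q.1 = ∑' (i : ℕ) (p : ι₁ × ι₂), F p i :=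
    Summable.tsum_prod' hW fun i => (hfiber i).summable
  have e4 : ∑' q : (ι₁ × ι₂) × ℕ, F q.1 q.2 = ∑' q : ℕ × (ι₁ × ι₂), F q.2 q.1 :=
    ((Equiv.prodComm (ι₁ × ι₂) ℕ).tsum_eq (fun q : ℕ × (ι₁ × ι₂) => F q.2 q.1))
  have e5 : ∑' (i : ℕ) (p : ι₁ × ι₂), F p i = ∑' i, τ i ^ 2 :=
    tsum_congr fun i => (hfiber i).tsum_eq
  rw [e1, ← e2, e4, e3, e5]
end
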